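/- Square example: for \(D=(0,1)^2\) and \(u(x,y)=\sin(\pi x)\sin(\pi y)\) (the first Dirichlet eigenfunction with \(\lambda_1=2\pi^2\)), the real part of the Cauchy transform at the corner \(z=0\) satisfies \(\Re(C_D u)(0) = -\frac{1}{\pi}\int_0^1\int_0^1 \frac{x\sin(\pi x)\sin(\pi y)}{x^2+y^2}\,dy\,dx < 0\), whereas \(v_0(0) = -\frac{4}{\lambda_1}\partial_z u(0,0) = 0\); hence \(C_D u \not\equiv v_0\) on the square. -/

import Mathlib

/-!
On the square, `Re (u(w) / (0 - w)) = -x u(x, y) / (x² + y²)` with `u > 0`, so the real part of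
the Cauchy transform at the corner is the integral of a negative function; it is a genuine
(Lebesgue) integral because `|u(w)| ≤ π · Re w` keeps the integrand bounded by `π`. On the other
hand both sine factors vanish at the corner, so `∇u(0) = 0` and `v₀(0) = 0`.
-/

open MeasureTheory

/-- Wirtinger derivative `∂_z = (∂_x - i ∂_y)/2`. -/
noncomputable def wdz (u : ℂ → ℂ) (z : ℂ) : ℂ :=
  (fderiv ℝ u z 1 - Complex.I * fderiv ℝ u z Complex.I) / 2

/-- The open unit square in `ℂ`. -/
def unitSquare : Set ℂ := {w : ℂ | w.re ∈ Set.Ioo (0 : ℝ) 1 ∧ w.im ∈ Set.Ioo (0 : ℝ) 1}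

/-- The first Dirichlet eigenfunction of the unit square, as a complex-valued function. -/
noncomputable def squareEig (w : ℂ) : ℂ :=
  ((Real.sin (Real.pi * w.re) * Real.sin (Real.pi * w.im) : ℝ) : ℂ)

open Set Real

lemma setIntegral_pos_of_pos_on {X : Type*} [MeasurableSpace X] {μ : Measure X} {s : Set X}
    {f : X → ℝ} (hs : MeasurableSet s) (hμs : 0 < μ s) (hf : IntegrableOn f s μ)
    (hpos : ∀ x ∈ s, 0 < f x) : 0 < ∫ x in s, f x ∂μ := by
  rw [setIntegral_pos_iff_support_of_nonneg_ae ?_ hf]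
  · rwa [inter_eq_right.mpr fun x hx => Function.mem_support.mpr (hpos x hx).ne']
  · exact (ae_restrict_iff' hs).mpr (ae_of_all _ fun x hx => (hpos x hx).le)

lemma Complex.integrableOn_reProdIm_iff {E : Type*} [NormedAddCommGroup E] {s t : Set ℝ}
    {g : ℝ × ℝ → E} :
    IntegrableOn (fun w : ℂ => g (w.re, w.im)) (s ×ℂ t) ↔ IntegrableOn g (s ×ˢ t) :=
  Complex.volume_preserving_equiv_real_prod.integrableOn_comp_preimage
    Complex.measurableEquivRealProd.measurableEmbedding (f := g) (s := s ×ˢ t)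

lemma Complex.setIntegral_reProdIm {E : Type*} [NormedAddCommGroup E] [NormedSpace ℝ E]
    (s t : Set ℝ) (g : ℝ × ℝ → E) :
    ∫ w in s ×ℂ t, g (w.re, w.im) = ∫ p in s ×ˢ t, g p :=
  Complex.volume_preserving_equiv_real_prod.setIntegral_preimage_emb
    Complex.measurableEquivRealProd.measurableEmbedding g (s ×ˢ t)

noncomputable def cornerIntegrand (p : ℝ × ℝ) : ℝ :=
  p.1 * sin (π * p.1) * sin (π * p.2) / (p.1 ^ 2 + p.2 ^ 2)

lemma unitSquare_eq_reProdIm : unitSquare = Ioo 0 1 ×ℂ Ioo 0 1 := rfl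

lemma re_squareEig_div_neg (w : ℂ) :
    (squareEig w / (0 - w)).re = -cornerIntegrand (w.re, w.im) := by
  simp only [squareEig, cornerIntegrand, Complex.div_re, Complex.normSq_apply, Complex.sub_re,
    Complex.sub_im, Complex.zero_re, Complex.zero_im, Complex.ofReal_re, Complex.ofReal_im]
  ring

lemma norm_squareEig_le (w : ℂ) : ‖squareEig w‖ ≤ π * ‖w‖ :=
  calc ‖squareEig w‖ = |sin (π * w.re)| * |sin (π * w.im)| := by
        rw [squareEig, Complex.norm_real, Real.norm_eq_abs, abs_mul]
    _ ≤ |π * w.re| * 1 := mul_le_mul abs_sin_le_abs (abs_sin_le_one _) (abs_nonneg _)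
        (abs_nonneg _)
    _ ≤ π * ‖w‖ := by
        rw [mul_one, abs_mul, abs_of_pos pi_pos]
        exact mul_le_mul_of_nonneg_left (Complex.abs_re_le_norm w) pi_pos.le

lemma norm_squareEig_div_neg_le (w : ℂ) : ‖squareEig w / (0 - w)‖ ≤ π := by
  rw [norm_div, zero_sub, norm_neg]
  rcases eq_or_ne w 0 with rfl | hw
  · simpa using pi_pos.le
  · exact div_le_of_le_mul₀ (norm_nonneg _) pi_pos.le (norm_squareEig_le w)

lemma integrableOn_squareEig_div_neg :
    IntegrableOn (fun w => squareEig w / (0 - w)) unitSquare := by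
  refine Measure.integrableOn_of_bounded ?_ ?_ (ae_of_all _ norm_squareEig_div_neg_le)
  · exact ((Metric.isBounded_Ioo 0 1).reProdIm (Metric.isBounded_Ioo 0 1)).measure_lt_top.ne
  · exact ((Complex.continuous_ofReal.comp (by fun_prop)).measurable.div
      (by fun_prop)).aestronglyMeasurable

lemma integrableOn_cornerIntegrand : IntegrableOn cornerIntegrand (Ioo 0 1 ×ˢ Ioo 0 1) := by
  rw [← Complex.integrableOn_reProdIm_iff, ← unitSquare_eq_reProdIm]
  refine IntegrableOn.congr_fun integrableOn_squareEig_div_neg.re.neg (fun w _ => ?_)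
    (isOpen_Ioo.reProdIm isOpen_Ioo).measurableSet
  change -(squareEig w / (0 - w)).re = _
  rw [re_squareEig_div_neg, neg_neg]

lemma cornerIntegrand_pos {p : ℝ × ℝ} (hp : p ∈ Ioo (0 : ℝ) 1 ×ˢ Ioo (0 : ℝ) 1) :
    0 < cornerIntegrand p := by
  obtain ⟨⟨hx0, hx1⟩, ⟨hy0, hy1⟩⟩ := hp
  have hsin {t : ℝ} (h0 : 0 < t) (h1 : t < 1) : 0 < sin (π * t) :=
    sin_pos_of_pos_of_lt_pi (by positivity) (by nlinarith [pi_pos])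
  unfold cornerIntegrand
  have := hsin hx0 hx1
  have := hsin hy0 hy1
  positivity

lemma re_integral_squareEig_div_neg :
    (∫ w in unitSquare, squareEig w / (0 - w)).re
      = -∫ p in Ioo (0 : ℝ) 1 ×ˢ Ioo (0 : ℝ) 1, cornerIntegrand p := by
  rw [← Complex.setIntegral_reProdIm, ← unitSquare_eq_reProdIm, ← integral_neg]
  simp_rw [← re_squareEig_div_neg]
  exact (integral_re integrableOn_squareEig_div_neg).symm

lemma setIntegral_cornerIntegrand_eq_iterated :
    ∫ p in Ioo (0 : ℝ) 1 ×ˢ Ioo (0 : ℝ) 1, cornerIntegrand p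
      = ∫ x in (0 : ℝ)..1, ∫ y in (0 : ℝ)..1,
          x * sin (π * x) * sin (π * y) / (x ^ 2 + y ^ 2) := by
  rw [Measure.volume_eq_prod, setIntegral_prod _ integrableOn_cornerIntegrand]
  simp only [intervalIntegral.integral_of_le zero_le_one, integral_Ioc_eq_integral_Ioo]
  rfl

lemma setIntegral_cornerIntegrand_pos :
    0 < ∫ p in Ioo (0 : ℝ) 1 ×ˢ Ioo (0 : ℝ) 1, cornerIntegrand p := by
  refine setIntegral_pos_of_pos_on (measurableSet_Ioo.prod measurableSet_Ioo) ?_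
    integrableOn_cornerIntegrand fun p hp => cornerIntegrand_pos hp
  simp [Measure.volume_eq_prod, Measure.prod_prod]

lemma fderiv_squareEig_zero : fderiv ℝ squareEig 0 = 0 := by
  have hprod : fderiv ℝ (fun w : ℂ => sin (π * w.re) * sin (π * w.im)) 0 = 0 := by
    rw [fderiv_fun_mul (by fun_prop) (by fun_prop)]
    simp
  change fderiv ℝ (Complex.ofRealCLM ∘ fun w : ℂ => sin (π * w.re) * sin (π * w.im)) 0 = 0
  rw [fderiv_comp _ (by fun_prop) (by fun_prop), ContinuousLinearMap.fderiv, hprod,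
    ContinuousLinearMap.comp_zero]

lemma wdz_squareEig_zero : wdz squareEig 0 = 0 := by
  simp [wdz, fderiv_squareEig_zero]

theorem stmt19 :
    ((1 / Real.pi : ℂ) * ∫ w in unitSquare, squareEig w / (0 - w)).re
      = -(1 / Real.pi) * ∫ x in (0 : ℝ)..1, ∫ y in (0 : ℝ)..1,
          x * Real.sin (Real.pi * x) * Real.sin (Real.pi * y) / (x ^ 2 + y ^ 2) ∧
    ((1 / Real.pi : ℂ) * ∫ w in unitSquare, squareEig w / (0 - w)).re < 0 ∧
    wdz squareEig 0 = 0 ∧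
    (1 / Real.pi : ℂ) * (∫ w in unitSquare, squareEig w / (0 - w))
      ≠ -(4 / (2 * Real.pi ^ 2) : ℂ) * wdz squareEig 0 := by
  have hre : ((1 / π : ℂ) * ∫ w in unitSquare, squareEig w / (0 - w)).re
      = -(1 / π) * ∫ x in (0 : ℝ)..1, ∫ y in (0 : ℝ)..1,
          x * sin (π * x) * sin (π * y) / (x ^ 2 + y ^ 2) := by
    rw [show (1 / π : ℂ) = ((1 / π : ℝ) : ℂ) by push_cast; rfl, Complex.re_ofReal_mul,
      re_integral_squareEig_div_neg, setIntegral_cornerIntegrand_eq_iterated]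
    ring
  have hneg : ((1 / π : ℂ) * ∫ w in unitSquare, squareEig w / (0 - w)).re < 0 := by
    rw [hre, ← setIntegral_cornerIntegrand_eq_iterated]
    exact mul_neg_of_neg_of_pos (by simpa using pi_pos) setIntegral_cornerIntegrand_pos
  refine ⟨hre, hneg, wdz_squareEig_zero, fun h => ?_⟩
  rw [h, wdz_squareEig_zero, mul_zero, Complex.zero_re] at hneg
  exact hneg.false
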